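/- Let α₁, …, α₅ ∈ ℂ and let (x, y, z) be a solution of the modified reduced three-wave interaction system (2) with parameters (α₁, α₂, α₃, α₄, α₅) on a connected open set U ⊆ ℂ. Then (x, −y, z) is a solution on U of system (2) with parameters (−α₃, α₄, −α₁, α₂, −α₅). -/
import Mathlib

open Complex

noncomputable section

/-- A solution of the modified reduced three-wave interaction dynamical system (2)
on a set `U ⊆ ℂ`, with parameters `α₁, …, α₅ : ℂ`. -/
def solMTWI (α₁ α₂ α₃ α₄ α₅ : ℂ) (x y z : ℂ → ℂ) (U : Set ℂ) : Prop :=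
  ∀ t ∈ U,
    HasDerivAt x
      (-2 * (y t) ^ 2 - (α₁ + α₃ - 2 * α₅) * y t + z t
        + (α₂ + α₄ + 2 * (α₁ + α₃) * α₅) / 2) t ∧
    HasDerivAt y
      (2 * x t * y t - 2 * α₅ * x t + I * (α₁ - α₃) * y t
        - I * (α₂ - α₄ + 2 * (α₁ - α₃) * α₅) / 2) t ∧
    HasDerivAt z
      (-2 * x t * z t - (α₂ + α₄) * x t + I * (α₂ - α₄) * y t
        - I * (α₁ - α₃) * z t + I * (α₂ * α₃ - α₁ * α₄)) t

theorem stmt10 (α₁ α₂ α₃ α₄ α₅ : ℂ) (U : Set ℂ) (hU : IsOpen U) (hUc : IsConnected U)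
    (x y z : ℂ → ℂ) (hsol : solMTWI α₁ α₂ α₃ α₄ α₅ x y z U) :
    solMTWI (-α₃) α₄ (-α₁) α₂ (-α₅) x (fun t => -y t) z U := by
  intro t ht
  obtain ⟨hx, hy, hz⟩ := hsol t ht
  refine ⟨hx.congr_deriv (by ring), (hy.neg).congr_deriv (by ring), hz.congr_deriv (by ring)⟩
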